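/- arXiv:1206.0033 — 6 statements merged into one kernel-verified Lean document; each statement's English description precedes it below -/
import Mathlib

section
/- Each nonzero eigenspace is one-dimensional over the fixed field: if G is a group acting by field automorphisms on a field C, and for a character λ : G → Cˣ we set C_λ = { c ∈ C ∣ ∀ g ∈ G, g • c = λ(g) · c }, then C_λ is a vector space over the fixed field C^G, and if C_λ ≠ 0 then dim_{C^G} C_λ = 1. -/
set_option synthInstance.maxHeartbeats 400000


/-- Each nonzero eigenspace of a group acting on a field by automorphisms is
one-dimensional over the fixed field. -/
theorem eigenspace_rank_one
    (G C : Type*) [Group G] [Field C] [MulSemiringAction G C]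
    (lam : G →* Cˣ)
    (V : Submodule (FixedPoints.subfield G C) C)
    (hV : (V : Set C) = {c : C | ∀ g : G, g • c = (lam g : C) * c})
    (hne : V ≠ ⊥) :
    Module.rank (FixedPoints.subfield G C) V = 1 := by
  obtain ⟨x, hxV, hx0⟩ := Submodule.exists_mem_ne_zero_of_ne_bot hne
  have hxe : ∀ g : G, g • x = (lam g : C) * x := by
    have := hxV
    rw [← SetLike.mem_coe, hV] at this
    exact this
  refine rank_eq_one (⟨x, hxV⟩ : V) (by simpa using hx0) ?_
  rintro ⟨y, hyV⟩
  have hye : ∀ g : G, g • y = (lam g : C) * y := by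
    rw [← SetLike.mem_coe, hV] at hyV
    exact hyV
  have hc : y * x⁻¹ ∈ FixedPoints.subfield G C := by
    intro g
    have : g • (y * x⁻¹) = (g • y) * (g • x)⁻¹ := by
      rw [smul_mul', smul_inv'']
    rw [this, hye, hxe, mul_inv, mul_comm ((lam g : C)) y, mul_assoc,
      ← mul_assoc (lam g : C), mul_inv_cancel₀ (Units.ne_zero (lam g)), one_mul]
  refine ⟨⟨y * x⁻¹, hc⟩, ?_⟩
  ext
  show (y * x⁻¹) * x = y
  field_simp
end

section
/- The set of eigenvalue characters forms a group: with C a field acted on by a group G via field automorphisms and C_λ the λ-eigenspace for a character λ : G → Cˣ, the set Γ = { λ ∣ C_λ ≠ 0 } is a subgroup of the character group Hom(G, Cˣ), and the sum ⊕_{λ ∈ Γ} C_λ is a subring of C; moreover C_λ · C_μ ⊆ C_{λμ} for all characters λ, μ. -/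
/-- The set of characters with nonzero eigenspace forms a subgroup of the
character group `G →* Cˣ`, the sum of the eigenspaces over this subgroup is a
subring of `C`, and `C_λ · C_μ ⊆ C_{λμ}`. -/
theorem eigenvalue_characters_subgroup
    (G C : Type*) [Group G] [Field C] [MulSemiringAction G C] :
    (∃ H : Subgroup (G →* Cˣ),
        (H : Set (G →* Cˣ)) =
          {lam : G →* Cˣ | ∃ c : C, c ≠ 0 ∧ ∀ g : G, g • c = (lam g : C) * c}) ∧
    (∃ S : Subring C,
        (S : Set C) =
          (Submodule.span (FixedPoints.subfield G C)
            (⋃ lam ∈ {lam : G →* Cˣ |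
                ∃ c : C, c ≠ 0 ∧ ∀ g : G, g • c = (lam g : C) * c},
              {c : C | ∀ g : G, g • c = (lam g : C) * c}) : Set C)) ∧
    (∀ (lam mu : G →* Cˣ) (a b : C),
        (∀ g : G, g • a = (lam g : C) * a) → (∀ g : G, g • b = (mu g : C) * b) →
        ∀ g : G, g • (a * b) = ((lam * mu) g : C) * (a * b)) := by
  have key : ∀ (lam mu : G →* Cˣ) (a b : C),
      (∀ g : G, g • a = (lam g : C) * a) → (∀ g : G, g • b = (mu g : C) * b) →
      ∀ g : G, g • (a * b) = ((lam * mu) g : C) * (a * b) := by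
    intro lam mu a b ha hb g
    rw [smul_mul', ha, hb, MonoidHom.mul_apply, Units.val_mul]
    ring
  set Γ : Set (G →* Cˣ) :=
    {lam : G →* Cˣ | ∃ c : C, c ≠ 0 ∧ ∀ g : G, g • c = (lam g : C) * c} with hΓ
  have hone : (1 : G →* Cˣ) ∈ Γ := ⟨1, one_ne_zero, fun g => by simp⟩
  have hmulΓ : ∀ {lam mu : G →* Cˣ}, lam ∈ Γ → mu ∈ Γ → lam * mu ∈ Γ := by
    rintro lam mu ⟨a, ha0, ha⟩ ⟨b, hb0, hb⟩
    exact ⟨a * b, mul_ne_zero ha0 hb0, key lam mu a b ha hb⟩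
  have hinvΓ : ∀ {lam : G →* Cˣ}, lam ∈ Γ → lam⁻¹ ∈ Γ := by
    rintro lam ⟨a, ha0, ha⟩
    refine ⟨a⁻¹, inv_ne_zero ha0, fun g => ?_⟩
    rw [smul_inv'', ha, mul_inv]
    simp
  refine ⟨⟨⟨⟨⟨Γ, fun h h' => hmulΓ h h'⟩, hone⟩, fun h => hinvΓ h⟩, rfl⟩, ?_, key⟩
  -- subring part
  set K := FixedPoints.subfield G C
  set U : Set C := ⋃ lam ∈ Γ, {c : C | ∀ g : G, g • c = (lam g : C) * c} with hU
  have hmemU : ∀ {lam : G →* Cˣ} {c : C}, lam ∈ Γ →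
      (∀ g : G, g • c = (lam g : C) * c) → c ∈ U := by
    intro lam c hl hc
    exact Set.mem_biUnion hl hc
  have h1U : (1 : C) ∈ U := hmemU hone (fun g => by simp)
  have hmulU : ∀ {x y : C}, x ∈ U → y ∈ U → x * y ∈ U := by
    intro x y hx hy
    rcases Set.mem_iUnion₂.mp hx with ⟨lam, hl, hxl⟩
    rcases Set.mem_iUnion₂.mp hy with ⟨mu, hm, hym⟩
    exact hmemU (hmulΓ hl hm) (key lam mu x y hxl hym)
  set S' : Submodule K C := Submodule.span K U with hS'
  have hmul : ∀ x ∈ S', ∀ y ∈ S', x * y ∈ S' := by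
    intro x hx
    induction hx using Submodule.span_induction with
    | mem x hxU =>
      intro y hy
      induction hy using Submodule.span_induction with
      | mem y hyU => exact Submodule.subset_span (hmulU hxU hyU)
      | zero => simpa using S'.zero_mem
      | add a b _ _ ha hb => rw [mul_add]; exact S'.add_mem ha hb
      | smul k a _ ha => rw [mul_smul_comm]; exact S'.smul_mem k ha
    | zero => intro y hy; simpa using S'.zero_mem
    | add a b _ _ ha hb =>
      intro y hy; rw [add_mul]; exact S'.add_mem (ha y hy) (hb y hy)
    | smul k a _ ha =>
      intro y hy; rw [smul_mul_assoc]; exact S'.smul_mem k (ha y hy)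
  refine ⟨{ carrier := S'
            zero_mem' := S'.zero_mem
            add_mem' := fun ha hb => S'.add_mem ha hb
            neg_mem' := fun ha => S'.neg_mem ha
            one_mem' := Submodule.subset_span h1U
            mul_mem' := fun {a b} ha hb => hmul a ha b hb }, rfl⟩
end

section
/- Every G-stable ideal of a group algebra with twisted diagonal action is generated by its invariants: let C be a field with an action of a group G by field automorphisms, Λ an abelian group, and ⟨-,-⟩ : Λ × G → Cˣ a bi-multiplicative pairing. Let G act on the group algebra S = C[Λ] by g • (c · x^λ) = (g • c) ⟨λ, g⟩ · x^λ. Then every G-stable ideal 𝔞 of S satisfies 𝔞 = (𝔞 ∩ S^G) · S. -/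
/-!
Induct on the size of the support. Multiplying by a unit monomial, an element `u` of `𝔞` may be
assumed to have constant coefficient `1`. If `u` is not invariant, some `t = g • u - u` is a
nonzero element of `𝔞` whose support lies in that of `u` but misses `0`, since the action fixes
the constant coefficient `1`. Then `t` and `u - c • t`, where `c` cancels one coefficient of `t`,
both have smaller support, so both lie in the ideal generated by the invariants, and so does `u`.
-/

open Finset

namespace Finsupp

variable {ι k : Type*} [Field k] [DecidableEq ι]

theorem support_sub_div_smul_subset_erase {u t : ι →₀ k} {μ : ι} (hμ : t μ ≠ 0)
    (hsub : t.support ⊆ u.support) : (u - (u μ / t μ) • t).support ⊆ u.support.erase μ := by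
  intro x hx
  rw [mem_support_iff, sub_apply, smul_apply, smul_eq_mul] at hx
  refine mem_erase.2 ⟨?_, mem_support_iff.2 fun hux => hx ?_⟩
  · rintro rfl
    exact hx (by rw [div_mul_cancel₀ _ hμ, sub_self])
  · have htx : t x = 0 := notMem_support_iff.1 fun h => mem_support_iff.1 (hsub h) hux
    rw [hux, htx, mul_zero, sub_zero]

end Finsupp

namespace AddMonoidAlgebra

variable {k Λ : Type*} [Field k]

section AddMonoid

variable [AddMonoid Λ]

theorem mem_of_support_ssubset {I J : Ideal k[Λ]} {u t : k[Λ]} (hu : u ∈ I) (ht : t ∈ I)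
    (ht0 : t ≠ 0) (hsub : t.coeff.support ⊂ u.coeff.support)
    (ih : ∀ v ∈ I, #v.coeff.support < #u.coeff.support → v ∈ J) : u ∈ J := by
  classical
  obtain ⟨μ, hμ⟩ := Finsupp.support_nonempty_iff.2 (coeff_eq_zero.not.2 ht0)
  set c := u.coeff μ / t.coeff μ
  have htJ : t ∈ J := ih t ht (card_lt_card hsub)
  have hvJ : u - c • t ∈ J := by
    refine ih _ (sub_mem hu (I.smul_of_tower_mem c ht)) (card_lt_card ?_)
    rw [coeff_sub, coeff_smul]
    exact (Finsupp.support_sub_div_smul_subset_erase (Finsupp.mem_support_iff.1 hμ)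
      hsub.subset).trans_ssubset (erase_ssubset (hsub.subset hμ))
  simpa using add_mem hvJ (J.smul_of_tower_mem c htJ)

end AddMonoid

section AddGroup

variable [AddGroup Λ]

theorem exists_isUnit_mul_coeff_zero_eq_one {s : k[Λ]} (hs : s ≠ 0) :
    ∃ m : k[Λ], IsUnit m ∧ (m * s).coeff 0 = 1 ∧ #(m * s).coeff.support = #s.coeff.support := by
  obtain ⟨l, hl⟩ := Finsupp.support_nonempty_iff.2 (coeff_eq_zero.not.2 hs)
  have hc : s.coeff l ≠ 0 := Finsupp.mem_support_iff.1 hl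
  have hunit : IsUnit (single (-l) (s.coeff l)⁻¹ : k[Λ]) :=
    ⟨⟨single (-l) (s.coeff l)⁻¹, single l (s.coeff l),
      by rw [single_mul_single, neg_add_cancel, inv_mul_cancel₀ hc, one_def],
      by rw [single_mul_single, add_neg_cancel, mul_inv_cancel₀ hc, one_def]⟩, rfl⟩
  refine ⟨_, hunit, ?_, ?_⟩
  · rw [coeff_single_mul_apply, neg_neg, add_zero, inv_mul_cancel₀ hc]
  · rw [support_coeff_single_mul _ _ (by simp [hc]), card_map]

theorem ideal_le_of_forall_coeff_zero_eq_one {I J : Ideal k[Λ]}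
    (h : ∀ u ∈ I, u.coeff 0 = 1 → (∀ v ∈ I, #v.coeff.support < #u.coeff.support → v ∈ J) →
      u ∈ J) :
    I ≤ J := by
  suffices ∀ n, ∀ s ∈ I, #s.coeff.support = n → s ∈ J from fun s hs => this _ s hs rfl
  intro n
  induction n using Nat.strong_induction_on with
  | _ n ih =>
    rintro s hs rfl
    rcases eq_or_ne s 0 with rfl | hs0
    · exact J.zero_mem
    obtain ⟨m, hm, hm1, hcard⟩ := exists_isUnit_mul_coeff_zero_eq_one hs0
    refine (J.unit_mul_mem_iff_mem hm).1 (h _ (I.mul_mem_left m hs) hm1 fun v hv hlt => ?_)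
    exact ih _ (hcard ▸ hlt) v hv rfl

end AddGroup

theorem support_coeff_sub_subset_erase_zero {G : Type*} [Monoid G] [MulSemiringAction G k]
    [AddMonoid Λ] [DecidableEq Λ] {g : G} {χ : Λ → k} (hχ : χ 0 = 1) {σ : k[Λ] → k[Λ]}
    (hσ : ∀ s l, (σ s).coeff l = g • s.coeff l * χ l) {u : k[Λ]} (hu : u.coeff 0 = 1) :
    (σ u - u).coeff.support ⊆ u.coeff.support.erase 0 := by
  intro l hl
  rw [Finsupp.mem_support_iff, coeff_sub, Finsupp.sub_apply, hσ] at hl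
  refine mem_erase.2 ⟨?_, Finsupp.mem_support_iff.2 fun hul => hl ?_⟩
  · rintro rfl
    exact hl (by rw [hu, hχ, smul_one, mul_one, sub_self])
  · rw [hul, smul_zero, zero_mul, sub_zero]

end AddMonoidAlgebra

theorem stable_ideal_generated_by_invariants_general
    (G C Λ : Type*) [Group G] [Field C] [MulSemiringAction G C]
    [AddCommGroup Λ]
    (pairing : Λ → G → Cˣ)
    (hp_add : ∀ l m : Λ, ∀ g : G, pairing (l + m) g = pairing l g * pairing m g)
    (act : G → RingAut (AddMonoidAlgebra C Λ))
    (hact : ∀ (g : G) (s : AddMonoidAlgebra C Λ) (l : Λ),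
      (act g s).coeff l = g • (s.coeff l) * (pairing l g : C))
    (𝔞 : Ideal (AddMonoidAlgebra C Λ))
    (hstable : ∀ (g : G), ∀ s ∈ 𝔞, act g s ∈ 𝔞) :
    𝔞 = Ideal.span {s : AddMonoidAlgebra C Λ | s ∈ 𝔞 ∧ ∀ g : G, act g s = s} := by
  classical
  have hp0 (g : G) : (pairing 0 g : C) = 1 := by simpa using hp_add 0 0 g
  refine le_antisymm (AddMonoidAlgebra.ideal_le_of_forall_coeff_zero_eq_one fun u hu hu0 ih => ?_)
    (Ideal.span_le.2 fun s hs => hs.1)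
  by_cases hinv : ∀ g, act g u = u
  · exact Ideal.subset_span ⟨hu, hinv⟩
  obtain ⟨g, hg⟩ := not_forall.1 hinv
  have hsub := AddMonoidAlgebra.support_coeff_sub_subset_erase_zero (hp0 g) (hact g) hu0
  refine AddMonoidAlgebra.mem_of_support_ssubset hu (sub_mem (hstable g u hu) hu)
    (sub_ne_zero.2 hg) (hsub.trans_ssubset (erase_ssubset ?_)) ih
  simp [hu0]

/-- Every `G`-stable ideal of the group algebra `S = C[Λ]`, with the twisted
diagonal action `g • (c·xᵘ) = (g • c)⟨λ,g⟩·xᵘ`, is generated by its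
intersection with the invariant subring `S^G`. -/
theorem stable_ideal_generated_by_invariants
    (G C Λ : Type*) [Group G] [Field C] [MulSemiringAction G C]
    [AddCommGroup Λ]
    (pairing : Λ → G → Cˣ)
    (hp_add : ∀ l m : Λ, ∀ g : G, pairing (l + m) g = pairing l g * pairing m g)
    (hp_mul : ∀ l : Λ, ∀ g h : G, pairing l (g * h) = pairing l g * pairing l h)
    (act : G → RingAut (AddMonoidAlgebra C Λ))
    (hact : ∀ (g : G) (s : AddMonoidAlgebra C Λ) (l : Λ),
      (act g s).coeff l = g • (s.coeff l) * (pairing l g : C))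
    (𝔞 : Ideal (AddMonoidAlgebra C Λ))
    (hstable : ∀ (g : G), ∀ s ∈ 𝔞, act g s ∈ 𝔞) :
    𝔞 = Ideal.span {s : AddMonoidAlgebra C Λ | s ∈ 𝔞 ∧ ∀ g : G, act g s = s} :=
  stable_ideal_generated_by_invariants_general G C Λ pairing hp_add act hact 𝔞 hstable
end

section
/- Eigenvector coefficients from invariance: let C be a field with a G-action by field automorphisms and let f_1, …, f_r be k-linearly independent regular functions on G (k ⊆ C^G a subfield), and c_1, …, c_r ∈ C satisfy Σ_i c_i f_i(x) = Σ_i (g • c_i) f_i(xg) for all x, g ∈ G. If there exist x_1, …, x_r ∈ G such that the matrix (f_i(x_j g)) is invertible for every g ∈ G, then each G-orbit G • c_i spans a finite-dimensional k-subspace of C; more precisely span_k{g • c_i ∣ g ∈ G, i} ⊆ span_k{c_1, …, c_r}. -/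
/-- Eigenvector coefficients from invariance: if `∑ c_i f_i(x) = ∑ (g•c_i) f_i(xg)`
for all `x, g ∈ G`, with `f_1, …, f_r` `k`-linearly independent and a choice of
points `x_1, …, x_r` making the matrices `(f_i(x_j g))` invertible, then the
`G`-orbits of the `c_i` stay inside the `k`-span of `c_1, …, c_r`. -/
theorem invariance_gives_locally_finite_coefficients
    (G k C : Type*) [Group G] [Field k] [Field C] [Algebra k C]
    [MulSemiringAction G C]
    (hk : ∀ (g : G) (a : k), g • (algebraMap k C a) = algebraMap k C a)
    (r : ℕ) (f : Fin r → G → k) (hf : LinearIndependent k f)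
    (c : Fin r → C)
    (hinv : ∀ x g : G,
      ∑ i, c i * algebraMap k C (f i x) =
        ∑ i, (g • c i) * algebraMap k C (f i (x * g)))
    (x : Fin r → G)
    (hx : ∀ g : G, IsUnit (Matrix.of fun i j : Fin r => f i (x j * g))) :
    ∀ (g : G) (i : Fin r), g • c i ∈ Submodule.span k (Set.range c) := by
  intro g i
  set φ := algebraMap k C with hφ
  set M : Matrix (Fin r) (Fin r) k := Matrix.of fun i j : Fin r => f i (x j * g) with hM
  have hMu : IsUnit M := hx g
  have hdet : IsUnit M.det := (Matrix.isUnit_iff_isUnit_det M).mp hMu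
  have hMinv : M * M⁻¹ = 1 := Matrix.mul_nonsing_inv M hdet
  set v : Fin r → C := fun i => g • c i with hv
  have key : Matrix.vecMul v (M.map φ) = fun j => ∑ l, c l * φ (f l (x j)) := by
    funext j
    simp only [Matrix.vecMul, dotProduct, Matrix.map_apply, hM, Matrix.of_apply, hv]
    exact (hinv (x j) g).symm
  have hmul : (M.map φ) * ((M⁻¹).map φ) = 1 := by
    rw [← Matrix.map_mul, hMinv, Matrix.map_one φ (map_zero φ) (map_one φ)]
  have hv2 : v = Matrix.vecMul (fun j => ∑ l, c l * φ (f l (x j))) ((M⁻¹).map φ) := by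
    rw [← key, Matrix.vecMul_vecMul, hmul, Matrix.vecMul_one]
  have hvm : v i ∈ Submodule.span k (Set.range c) := by
    rw [hv2]
    simp only [Matrix.vecMul, dotProduct]
    apply Submodule.sum_mem
    intro j _
    rw [Finset.sum_mul]
    apply Submodule.sum_mem
    intro l _
    have h : c l * φ (f l (x j)) * ((M⁻¹).map φ) j i = (f l (x j) * (M⁻¹ j i)) • c l := by
      simp only [Algebra.smul_def, Matrix.map_apply, map_mul, hφ]
      ring
    rw [h]
    exact Submodule.smul_mem _ _ (Submodule.subset_span ⟨l, rfl⟩)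
  exact hvm
end

section
/- Support-shrinking argument in group algebras: let S = C[Λ] be the group algebra of an abelian group Λ over a field C with the twisted diagonal action g • (c x^λ) = (g•c)⟨λ,g⟩ x^λ of a group G, and let s ∈ S with 0 ∈ Supp(s) and coefficient s_0 = 1. If for every g ∈ G the element s − g • s has support strictly contained in Supp(s) only when it is zero (i.e., every t in the ideal generated by s with Supp(t) ⊊ Supp(s) is zero), then s ∈ S^G. -/
/-!
Since `s₀ = 1` and `⟨0, g⟩ = 1`, the element `s - g • s` of the `G`-stable ideal generated by `s`
has vanishing constant coefficient, and it vanishes wherever `s` does; so its support is strictly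
smaller than `Supp s`, and minimality forces `s - g • s = 0`.
-/

theorem Finsupp.support_sub_ssubset {α M : Type*} [AddGroup M] {f g : α →₀ M}
    (hgf : g.support ⊆ f.support) {a : α} (ha : a ∈ f.support) (hfg : f a = g a) :
    (f - g).support ⊂ f.support := by
  classical
  refine ⟨Finsupp.support_sub.trans (Finset.union_subset le_rfl hgf), fun hsup => ?_⟩
  have : (f - g) a ≠ 0 := Finsupp.mem_support_iff.mp (hsup ha)
  exact this (by rw [Finsupp.sub_apply, hfg, sub_self])

section TwistedAction

variable {G C Λ : Type*} [Group G] [Field C] [MulSemiringAction G C] [AddCommGroup Λ]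
  {pairing : Λ → G → Cˣ} {act : G → RingAut (AddMonoidAlgebra C Λ)}

theorem twistedAction_one_apply
    (hp_mul : ∀ l : Λ, ∀ g h : G, pairing l (g * h) = pairing l g * pairing l h)
    (hact : ∀ (g : G) (s : AddMonoidAlgebra C Λ) (l : Λ),
      (act g s).coeff l = g • (s.coeff l) * (pairing l g : C))
    (s : AddMonoidAlgebra C Λ) : act 1 s = s := by
  ext l
  have hp1 : pairing l 1 = 1 := map_one (MonoidHom.mk' (pairing l) (hp_mul l))
  rw [hact, hp1, Units.val_one, mul_one, one_smul]

theorem twistedAction_coeff_zero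
    (hp_add : ∀ l m : Λ, ∀ g : G, pairing (l + m) g = pairing l g * pairing m g)
    (hact : ∀ (g : G) (s : AddMonoidAlgebra C Λ) (l : Λ),
      (act g s).coeff l = g • (s.coeff l) * (pairing l g : C))
    (g : G) (s : AddMonoidAlgebra C Λ) : (act g s).coeff 0 = g • s.coeff 0 := by
  have hp0 : pairing 0 g = 1 := left_eq_mul.mp (by rw [← hp_add 0 0 g, add_zero])
  rw [hact, hp0, Units.val_one, mul_one]

theorem support_twistedAction_subset
    (hact : ∀ (g : G) (s : AddMonoidAlgebra C Λ) (l : Λ),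
      (act g s).coeff l = g • (s.coeff l) * (pairing l g : C))
    (g : G) (s : AddMonoidAlgebra C Λ) : (act g s).coeff.support ⊆ s.coeff.support := by
  intro l hl
  rw [Finsupp.mem_support_iff] at hl ⊢
  intro hsl
  exact hl (by rw [hact, hsl, smul_zero, zero_mul])

end TwistedAction

/-- Support-shrinking argument: if `s ∈ C[Λ]` has `s₀ = 1` and every element of
the `G`-stable ideal generated by `s` whose support is strictly contained in
`Supp s` vanishes, then `s` is `G`-invariant. -/
theorem support_shrinking_invariance
    (G C Λ : Type*) [Group G] [Field C] [MulSemiringAction G C]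
    [AddCommGroup Λ]
    (pairing : Λ → G → Cˣ)
    (hp_add : ∀ l m : Λ, ∀ g : G, pairing (l + m) g = pairing l g * pairing m g)
    (hp_mul : ∀ l : Λ, ∀ g h : G, pairing l (g * h) = pairing l g * pairing l h)
    (act : G → RingAut (AddMonoidAlgebra C Λ))
    (hact : ∀ (g : G) (s : AddMonoidAlgebra C Λ) (l : Λ),
      (act g s).coeff l = g • (s.coeff l) * (pairing l g : C))
    (s : AddMonoidAlgebra C Λ) (hs0 : s.coeff 0 = 1)
    (hmin : ∀ t ∈ Ideal.span {u : AddMonoidAlgebra C Λ | ∃ g : G, u = act g s},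
      t.coeff.support ⊂ s.coeff.support → t = 0) :
    ∀ g : G, act g s = s := by
  intro g
  have hs_mem : s ∈ Ideal.span {u | ∃ g : G, u = act g s} :=
    Ideal.subset_span ⟨1, (twistedAction_one_apply hp_mul hact s).symm⟩
  have hgs_mem : act g s ∈ Ideal.span {u | ∃ g : G, u = act g s} :=
    Ideal.subset_span ⟨g, rfl⟩
  have hsupp : (s - act g s).coeff.support ⊂ s.coeff.support := by
    rw [AddMonoidAlgebra.coeff_sub]
    refine Finsupp.support_sub_ssubset (a := 0) (support_twistedAction_subset hact g s) ?_ ?_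
    · simp [hs0]
    · rw [twistedAction_coeff_zero hp_add hact, hs0, smul_one]
  exact (sub_eq_zero.mp (hmin _ (Ideal.sub_mem _ hs_mem hgs_mem) hsupp)).symm
end

section
/- Invariants of the group-algebra coefficients lie in the locally finite part: let G be a group, k a field, and C a commutative k-algebra with G-action by k-algebra automorphisms. Let k[G] be a k-algebra of k-valued functions on G that is point-separating in the sense that for any k-linearly independent f_1, …, f_r ∈ k[G] there exist x_1, …, x_r ∈ G with (f_i(x_j g))_{i,j} invertible for all g ∈ G. Let G act on S = C ⊗_k k[G] by (g • (c ⊗ f))(x) = (g • c) f(xg). Then every G-invariant element of S lies in Z ⊗_k k[G], where Z = { c ∈ C ∣ span_k(G•c) is finite-dimensional }. -/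
/-- Invariants of `S = C ⊗_k k[G]` lie in `Z ⊗_k k[G]`: if `k[G]` is a
point-separating algebra of functions on `G` and the element
`∑ c_i ⊗ f_i` (with `f_i` linearly independent) is `G`-invariant, i.e.
`∑ f_i(x)•c_i = ∑ f_i(xg)•(g•c_i)` for all `x, g`, then each coefficient `c_i`
lies in the locally finite part `Z`. -/
theorem invariants_lie_in_locallyFinite_part
    (G k C : Type*) [Group G] [Field k] [CommRing C] [Algebra k C]
    [MulSemiringAction G C] [SMulCommClass G k C]
    (F : Subalgebra k (G → k))
    (hsep : ∀ (r : ℕ) (f : Fin r → F),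
      LinearIndependent k (fun i => (f i : G → k)) →
      ∃ x : Fin r → G, ∀ g : G,
        IsUnit (Matrix.of fun i j : Fin r => (f i : G → k) (x j * g)))
    (r : ℕ) (f : Fin r → F)
    (hf : LinearIndependent k (fun i => (f i : G → k)))
    (c : Fin r → C)
    (hinv : ∀ x g : G,
      ∑ i, (f i : G → k) x • c i = ∑ i, (f i : G → k) (x * g) • (g • c i)) :
    ∀ i, c i ∈
      {z : C | Module.Finite k
        (Submodule.span k (Set.range fun g : G => g • z))} := by
  obtain ⟨x, hx⟩ := hsep r f hf
  set b : Fin r → C := fun j => ∑ i, (f i : G → k) (x j) • c i with hb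
  intro i
  have key : ∀ g : G, g • c i ∈ Submodule.span k (Set.range b) := by
    intro g
    set M : Matrix (Fin r) (Fin r) k :=
      Matrix.of fun i j : Fin r => (f i : G → k) (x j * g) with hM
    have hdet : IsUnit M.det := (Matrix.isUnit_iff_isUnit_det M).mp (hx g)
    have hdetT : IsUnit M.transpose.det := by rwa [Matrix.det_transpose]
    set N : Matrix (Fin r) (Fin r) k := M.transpose⁻¹ with hN
    have hNM : N * M.transpose = 1 := Matrix.nonsing_inv_mul _ hdetT
    have hbj : ∀ j, b j = ∑ i', M i' j • (g • c i') := fun j => hinv (x j) g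
    have hexp : g • c i = ∑ j, N i j • b j := by
      calc g • c i = ∑ i', (1 : Matrix (Fin r) (Fin r) k) i i' • (g • c i') := by
            rw [Finset.sum_eq_single i]
            · simp
            · intro j _ hj
              simp [Matrix.one_apply_ne' hj]
            · intro h; exact absurd (Finset.mem_univ i) h
        _ = ∑ i', (∑ j, N i j * M.transpose j i') • (g • c i') := by
            rw [← hNM]; simp [Matrix.mul_apply]
        _ = ∑ i', ∑ j, (N i j * M i' j) • (g • c i') := by
            simp [Finset.sum_smul, Matrix.transpose_apply]
        _ = ∑ j, ∑ i', (N i j * M i' j) • (g • c i') := Finset.sum_comm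
        _ = ∑ j, N i j • b j := by
            refine Finset.sum_congr rfl fun j _ => ?_
            rw [hbj j, Finset.smul_sum]
            exact Finset.sum_congr rfl fun i' _ => (mul_smul _ _ _)
    rw [hexp]
    exact Submodule.sum_mem _ fun j _ =>
      Submodule.smul_mem _ _ (Submodule.subset_span ⟨j, rfl⟩)
  have hle : Submodule.span k (Set.range fun g : G => g • c i) ≤
      Submodule.span k (Set.range b) := by
    rw [Submodule.span_le]
    rintro _ ⟨g, rfl⟩
    exact key g
  have : FiniteDimensional k (Submodule.span k (Set.range b)) :=
    FiniteDimensional.span_of_finite k (Set.finite_range b)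
  exact Submodule.finiteDimensional_of_le hle
end
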